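/- arXiv:1112.4263 — 3 statements merged into one kernel-verified Lean document; each statement's English description precedes it below -/
import Mathlib

section
/- Let $H$ be a Hilbert space and $V \subset H$ a dense subspace, with $b$ a continuous coercive hermitian sesquilinear form on $V$ (i.e., there exist $c>0$, $C$, $\Lambda$ with $c\|u\|_V^2 \le b(u,u)+\Lambda\langle u,u\rangle_H \le C\|u\|_V^2$ for all $u \in V$). Define the operator $A$ on the domain $\mathrm{Dom}(A) = \{u \in V : \underline{A}u \in H\}$, where $\underline{A}: V \to V'$ is given by $\langle \underline{A}u, v\rangle = b(u,v)$. Then $A$ is self-adjoint. -/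
open scoped RealInnerProductSpace InnerProductSpace

/-!
A symmetric operator `T` for which `T + μ` is onto for some real `μ` is self-adjoint: if `y` is
in the domain of `T†`, choose `x₀` with `(T + μ) x₀ = (T† + μ) y`; then `y - x₀` is orthogonal to
the range of `T + μ`, so `y = x₀`; the same argument applied to a vector orthogonal to the domain
shows that the domain is dense. The operator of the form `b` is symmetric because `b` is, and
`A + Λ` is onto because `b + Λ ⟪e ·, e ·⟫` is coercive, so Lax–Milgram solves `(A + Λ) x = w`
weakly, tested against the dense range of `e`.
-/

namespace LinearPMap

variable {𝕜 E : Type*} [RCLike 𝕜] [NormedAddCommGroup E] [InnerProductSpace 𝕜 E]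
  {T : E →ₗ.[𝕜] E} {μ : ℝ}

theorem IsFormalAdjoint.inner_add_ofReal_smul (hT : T.IsFormalAdjoint T) (x y : T.domain) :
    ⟪T x + (μ : 𝕜) • (x : E), y⟫_𝕜 = ⟪(x : E), T y + (μ : 𝕜) • (y : E)⟫_𝕜 := by
  rw [inner_add_left, inner_add_right, inner_smul_real_left, inner_smul_real_right, hT x y]

theorem eq_zero_of_forall_inner_add_ofReal_smul_eq_zero
    (hsurj : Function.Surjective fun x : T.domain => T x + (μ : 𝕜) • (x : E)) {y : E}
    (hy : ∀ x : T.domain, ⟪y, T x + (μ : 𝕜) • (x : E)⟫_𝕜 = 0) : y = 0 := by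
  obtain ⟨x, rfl⟩ := hsurj y
  exact inner_self_eq_zero.mp (hy x)

variable [CompleteSpace E]

theorem IsFormalAdjoint.dense_domain_of_surjective_add_ofReal_smul
    (hT : T.IsFormalAdjoint T)
    (hsurj : Function.Surjective fun x : T.domain => T x + (μ : 𝕜) • (x : E)) :
    Dense (T.domain : Set E) := by
  rw [Submodule.dense_iff_topologicalClosure_eq_top, Submodule.topologicalClosure_eq_top_iff,
    Submodule.eq_bot_iff]
  intro f hf
  obtain ⟨x₀, rfl⟩ := hsurj f
  suffices hx₀ : x₀ = 0 by simp [hx₀]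
  refine Subtype.ext (eq_zero_of_forall_inner_add_ofReal_smul_eq_zero hsurj fun x => ?_)
  rw [← hT.inner_add_ofReal_smul, inner_eq_zero_symm]
  exact (Submodule.mem_orthogonal _ _).mp hf x x.2

theorem IsFormalAdjoint.adjoint_le_of_surjective_add_ofReal_smul
    (hT : T.IsFormalAdjoint T)
    (hsurj : Function.Surjective fun x : T.domain => T x + (μ : 𝕜) • (x : E)) :
    T† ≤ T := by
  have hdense := hT.dense_domain_of_surjective_add_ofReal_smul hsurj
  refine le_of_eqLocus_ge fun y hy => ?_
  obtain ⟨x₀, hx₀⟩ := hsurj (T† ⟨y, hy⟩ + (μ : 𝕜) • y)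
  beta_reduce at hx₀
  have hyx₀ : y - x₀ = 0 := by
    refine eq_zero_of_forall_inner_add_ofReal_smul_eq_zero hsurj fun x => ?_
    rw [inner_sub_left, ← hT.inner_add_ofReal_smul, hx₀, inner_add_right, inner_add_left,
      inner_smul_real_right, inner_smul_real_left, adjoint_isFormalAdjoint hdense ⟨y, hy⟩ x,
      sub_self]
  obtain rfl : y = x₀ := sub_eq_zero.mp hyx₀
  exact ⟨hy, x₀.2, (add_right_cancel hx₀).symm⟩

theorem IsFormalAdjoint.isSelfAdjoint_of_surjective_add_ofReal_smul
    (hT : T.IsFormalAdjoint T)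
    (hsurj : Function.Surjective fun x : T.domain => T x + (μ : 𝕜) • (x : E)) :
    IsSelfAdjoint T :=
  le_antisymm (hT.adjoint_le_of_surjective_add_ofReal_smul hsurj)
    (hT.le_adjoint (hT.dense_domain_of_surjective_add_ofReal_smul hsurj))

end LinearPMap

theorem IsCoercive.exists_forall_apply_eq {V : Type*} [NormedAddCommGroup V]
    [InnerProductSpace ℝ V] [CompleteSpace V] {B : V →L[ℝ] V →L[ℝ] ℝ} (hB : IsCoercive B)
    (φ : StrongDual ℝ V) : ∃ u : V, ∀ v : V, B u v = φ v :=
  ⟨hB.continuousLinearEquivOfBilin.symm ((InnerProductSpace.toDual ℝ V).symm φ), fun v => by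
    rw [← hB.continuousLinearEquivOfBilin_apply, ContinuousLinearEquiv.apply_symm_apply,
      InnerProductSpace.toDual_symm_apply]⟩

section FormOperator

variable {H V : Type*} [NormedAddCommGroup H] [InnerProductSpace ℝ H]
  [NormedAddCommGroup V] [InnerProductSpace ℝ V]
  {e : V →L[ℝ] H} {b : V →L[ℝ] V →L[ℝ] ℝ} {Λ : ℝ}

theorem isCoercive_add_smul_bilinearComp_innerSL {c : ℝ} (hc : 0 < c)
    (hb : ∀ u : V, c * ‖u‖ ^ 2 ≤ b u u + Λ * ⟪e u, e u⟫) :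
    IsCoercive (b + Λ • ((innerSL ℝ).bilinearComp e e : V →L[ℝ] V →L[ℝ] ℝ)) :=
  ⟨c, hc, fun u => by simpa [pow_two, mul_assoc] using hb u⟩

theorem LinearPMap.isFormalAdjoint_self_of_symmetric_form {A : H →ₗ.[ℝ] H}
    (hsymm : ∀ u v : V, b u v = b v u) (hdom : ∀ x ∈ A.domain, ∃ u : V, e u = x)
    (happ : ∀ (x : A.domain) (u : V), e u = (x : H) → ∀ v : V, ⟪A x, e v⟫ = b u v) :
    A.IsFormalAdjoint A := by
  intro x y
  obtain ⟨u, hu⟩ := hdom x x.2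
  obtain ⟨w, hw⟩ := hdom y y.2
  calc ⟪A x, (y : H)⟫ = b u w := by rw [← hw, happ x u hu]
    _ = b w u := hsymm u w
    _ = ⟪(x : H), A y⟫ := by rw [← happ y w hw, ← hu, real_inner_comm]

theorem LinearPMap.surjective_add_smul_of_isCoercive_form [CompleteSpace V] {A : H →ₗ.[ℝ] H}
    (he : DenseRange e)
    (hB : IsCoercive (b + Λ • ((innerSL ℝ).bilinearComp e e : V →L[ℝ] V →L[ℝ] ℝ)))
    (hdom : ∀ u : V, (∃ f : H, ∀ v : V, b u v = ⟪f, e v⟫) → e u ∈ A.domain)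
    (happ : ∀ (x : A.domain) (u : V), e u = (x : H) → ∀ v : V, ⟪A x, e v⟫ = b u v) :
    Function.Surjective fun x : A.domain => A x + Λ • (x : H) := by
  intro w
  obtain ⟨u, hu⟩ := hB.exists_forall_apply_eq ((innerSL ℝ w).comp e)
  have hu' : ∀ v, b u v + Λ * ⟪e u, e v⟫ = ⟪w, e v⟫ := by simpa using hu
  have hmem : e u ∈ A.domain := hdom u ⟨w - Λ • e u, fun v => by
    rw [inner_sub_left, real_inner_smul_left, ← hu' v, add_sub_cancel_right]⟩
  refine ⟨⟨e u, hmem⟩, he.eq_of_inner_left ℝ fun v => ?_⟩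
  rw [inner_add_left, real_inner_smul_left, happ _ u rfl, ← hu' v]

end FormOperator

theorem form_operator_isSelfAdjoint_general
    {H V : Type*} [NormedAddCommGroup H] [InnerProductSpace ℝ H] [CompleteSpace H]
    [NormedAddCommGroup V] [InnerProductSpace ℝ V] [CompleteSpace V]
    (e : V →L[ℝ] H) (hdense : DenseRange e)
    (b : V →L[ℝ] V →L[ℝ] ℝ)
    (hsymm : ∀ u v : V, b u v = b v u)
    (c C Λ : ℝ) (hc : 0 < c)
    (hcoer : ∀ u : V,
      c * ‖u‖ ^ 2 ≤ b u u + Λ * ⟪e u, e u⟫ ∧ b u u + Λ * ⟪e u, e u⟫ ≤ C * ‖u‖ ^ 2)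
    (A : H →ₗ.[ℝ] H)
    (hdom : ∀ x : H,
      x ∈ A.domain ↔ ∃ u : V, e u = x ∧ ∃ f : H, ∀ v : V, b u v = ⟪f, e v⟫)
    (happ : ∀ (x : A.domain) (u : V), e u = (x : H) →
      ∀ v : V, ⟪A x, e v⟫ = b u v) :
    IsSelfAdjoint A := by
  have hB := isCoercive_add_smul_bilinearComp_innerSL hc fun u => (hcoer u).1
  have hsymmA : A.IsFormalAdjoint A :=
    LinearPMap.isFormalAdjoint_self_of_symmetric_form hsymm
      (fun x hx => ((hdom x).1 hx).imp fun _ hu => hu.1) happ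
  have hsurj := LinearPMap.surjective_add_smul_of_isCoercive_form hdense hB
    (fun u hu => (hdom (e u)).2 ⟨u, rfl, hu⟩) happ
  exact hsymmA.isSelfAdjoint_of_surjective_add_ofReal_smul (μ := Λ) hsurj

/-- The operator associated with a continuous coercive hermitian
sesquilinear form `b` on a dense subspace `V` of a Hilbert space `H`, restricted to the
domain `{u ∈ V : Au ∈ H}`, is self-adjoint. Here `V` embeds into `H` via `e`. -/
theorem form_operator_isSelfAdjoint
    {H V : Type*} [NormedAddCommGroup H] [InnerProductSpace ℝ H] [CompleteSpace H]
    [NormedAddCommGroup V] [InnerProductSpace ℝ V] [CompleteSpace V]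
    (e : V →L[ℝ] H) (he : Function.Injective e) (hdense : DenseRange e)
    (b : V →L[ℝ] V →L[ℝ] ℝ)
    (hsymm : ∀ u v : V, b u v = b v u)
    (c C Λ : ℝ) (hc : 0 < c)
    (hcoer : ∀ u : V,
      c * ‖u‖ ^ 2 ≤ b u u + Λ * ⟪e u, e u⟫ ∧ b u u + Λ * ⟪e u, e u⟫ ≤ C * ‖u‖ ^ 2)
    (A : H →ₗ.[ℝ] H)
    (hdom : ∀ x : H,
      x ∈ A.domain ↔ ∃ u : V, e u = x ∧ ∃ f : H, ∀ v : V, b u v = ⟪f, e v⟫)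
    (happ : ∀ (x : A.domain) (u : V), e u = (x : H) →
      ∀ v : V, ⟪A x, e v⟫ = b u v) :
    IsSelfAdjoint A :=
  form_operator_isSelfAdjoint_general e hdense b hsymm c C Λ hc hcoer A hdom happ
end

section
/- With $\psi_n(x,y) = \chi_n(x)\sin y$ as above and $\phi(x,y) = \eta(x)\eta(y-\pi)\cos(y-\pi)$, where $\eta$ is a smooth function supported in $(-\pi,0)$, the shifted bilinear form satisfies $\tilde{b}_\theta(\psi_n,\phi) = -\int_{-\pi}^0 \eta^2(x)\cos^2(x)\,dx < 0$, a value independent of $n$. -/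
open MeasureTheory Real

/-- The reference half-guide
`Ω̃ = {(x,y) ∈ (-π,∞) × (0,π) : y < x + π if x < 0}`. -/
def guide : Set (ℝ × ℝ) :=
  {p | -π < p.1 ∧ 0 < p.2 ∧ p.2 < π ∧ (p.1 < 0 → p.2 < p.1 + π)}

/-- The shifted bilinear form
`b̃_θ(ψ,ψ') = ∫_{Ω̃} tan²θ ∂_xψ ∂_xψ' + ∂_yψ ∂_yψ' − ψψ'`. -/
noncomputable def shiftedBilin (θ : ℝ) (ψ ψ' : ℝ × ℝ → ℝ) : ℝ :=
  ∫ p in guide,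
    (tan θ) ^ 2 * (fderiv ℝ ψ p (1, 0)) * (fderiv ℝ ψ' p (1, 0)) +
      (fderiv ℝ ψ p (0, 1)) * (fderiv ℝ ψ' p (0, 1)) - ψ p * ψ' p

/-- auxiliary functions -/
noncomputable def Gf (η : ℝ → ℝ) (y : ℝ) : ℝ := η (y - π) * cos (y - π)
noncomputable def Gf' (η : ℝ → ℝ) (y : ℝ) : ℝ :=
  deriv η (y - π) * cos (y - π) - η (y - π) * sin (y - π)
noncomputable def Ff (η : ℝ → ℝ) (p : ℝ × ℝ) : ℝ :=
  cos p.2 * (η p.1 * Gf' η p.2) - sin p.2 * (η p.1 * Gf η p.2)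

section aux
variable {η : ℝ → ℝ}

lemma eta_zero (hηsupp : tsupport η ⊆ Set.Ioo (-π) 0) {x : ℝ}
    (hx : x ∉ Set.Ioo (-π) 0) : η x = 0 :=
  image_eq_zero_of_notMem_tsupport fun h => hx (hηsupp h)

lemma deriv_eta_zero (hηsupp : tsupport η ⊆ Set.Ioo (-π) 0) {x : ℝ}
    (hx : x ∉ Set.Ioo (-π) 0) : deriv η x = 0 := by
  have hxn : x ∉ tsupport η := fun h => hx (hηsupp h)
  have hev : η =ᶠ[nhds x] fun _ => (0 : ℝ) := by
    filter_upwards [(isClosed_tsupport η).isOpen_compl.mem_nhds hxn] with y hy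
    exact image_eq_zero_of_notMem_tsupport hy
  rw [hev.deriv_eq]
  simp

lemma hasDerivAt_Gf (hη : ContDiff ℝ (⊤ : ℕ∞) η) (y : ℝ) :
    HasDerivAt (Gf η) (Gf' η y) y := by
  have h1 : HasDerivAt (fun t : ℝ => η (t - π)) (deriv η (y - π)) y := by
    have := ((hη.differentiable (by simp) (y - π)).hasDerivAt).comp y
      ((hasDerivAt_id y).sub_const π)
    simpa [Function.comp_def] using this
  have h2 : HasDerivAt (fun t : ℝ => cos (t - π)) (-sin (y - π)) y := by
    have h := (Real.hasDerivAt_cos (y - π)).comp y ((hasDerivAt_id y).sub_const π)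
    rw [mul_one] at h
    exact h
  have := h1.fun_mul h2
  simp only [Gf, Gf']
  convert this using 1
  all_goals first | rfl | ring

lemma continuous_Gf (hη : ContDiff ℝ (⊤ : ℕ∞) η) : Continuous (Gf η) := by
  have hc : Continuous η := hη.continuous
  unfold Gf; fun_prop

lemma continuous_Gf' (hη : ContDiff ℝ (⊤ : ℕ∞) η) : Continuous (Gf' η) := by
  have hc : Continuous η := hη.continuous
  have hd : Continuous (deriv η) := hη.continuous_deriv (by simp)
  unfold Gf'; fun_prop

lemma continuous_Ff (hη : ContDiff ℝ (⊤ : ℕ∞) η) : Continuous (Ff η) := by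
  have hc : Continuous η := hη.continuous
  have h1 := continuous_Gf hη
  have h2 := continuous_Gf' hη
  unfold Ff; fun_prop

lemma hasDerivAt_M (hη : ContDiff ℝ (⊤ : ℕ∞) η) (x y : ℝ) :
    HasDerivAt (fun t => η x * Gf η t * cos t) (Ff η (x, y)) y := by
  have h := ((hasDerivAt_Gf hη y).const_mul (η x)).fun_mul (Real.hasDerivAt_cos y)
  convert h using 1
  all_goals first | rfl | simp only [Ff]
  ring

lemma guide_eq : guide = {p : ℝ × ℝ | 0 < p.2 ∧ p.2 < π ∧ p.2 - π < p.1} := by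
  ext p
  simp only [guide, Set.mem_setOf_eq]
  constructor
  · rintro ⟨h1, h2, h3, h4⟩
    refine ⟨h2, h3, ?_⟩
    by_cases hx : p.1 < 0
    · linarith [h4 hx]
    · linarith
  · rintro ⟨h2, h3, h4⟩
    exact ⟨by linarith, h2, h3, fun _ => by linarith⟩

lemma guide_measurable : MeasurableSet guide := by
  rw [guide_eq]
  apply MeasurableSet.inter
  · exact measurableSet_lt measurable_const measurable_snd
  apply MeasurableSet.inter
  · exact measurableSet_lt measurable_snd measurable_const
  · exact measurableSet_lt (measurable_snd.sub measurable_const) measurable_fst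

end aux

/-- With `ψ_n(x,y) = χ(x/n) sin y` and
`φ(x,y) = η(x) η(y-π) cos(y-π)`, where `η` is smooth, supported in `(-π,0)` and not
identically zero, one has `b̃_θ(ψ_n,φ) = -∫_{-π}^0 η²(x) cos²(x) dx < 0`,
a value independent of `n`. -/
theorem shiftedBilin_coupling (θ : ℝ) (hθ₁ : 0 < θ) (hθ₂ : θ < π / 2)
    (χ : ℝ → ℝ) (hχ : ContDiff ℝ (⊤ : ℕ∞) χ)
    (hχ0 : ∀ x : ℝ, x ≤ 0 → χ x = 1) (hχ1 : ∀ x : ℝ, 1 ≤ x → χ x = 0)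
    (η : ℝ → ℝ) (hη : ContDiff ℝ (⊤ : ℕ∞) η)
    (hηsupp : tsupport η ⊆ Set.Ioo (-π) 0) (hηne : ∃ x : ℝ, η x ≠ 0) :
    (∀ n : ℕ, 0 < n →
      shiftedBilin θ (fun p => χ (p.1 / n) * sin p.2)
          (fun p => η p.1 * (η (p.2 - π) * cos (p.2 - π))) =
        -∫ x in (-π)..0, (η x) ^ 2 * (cos x) ^ 2) ∧
    (-∫ x in (-π)..0, (η x) ^ 2 * (cos x) ^ 2) < 0 := by
  have hpos : 0 < ∫ x in (-π)..0, (η x) ^ 2 * (cos x) ^ 2 := by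
    obtain ⟨x0, hx0⟩ := hηne
    have hx0mem : x0 ∈ Set.Ioo (-π) 0 := hηsupp (subset_tsupport η hx0)
    have hηcont : Continuous η := hη.continuous
    have hUopen : IsOpen ({x : ℝ | η x ≠ 0} ∩ Set.Ioo (-π) 0) :=
      (isOpen_compl_singleton.preimage hηcont).inter isOpen_Ioo
    have hx0U : x0 ∈ {x : ℝ | η x ≠ 0} ∩ Set.Ioo (-π) 0 := ⟨hx0, hx0mem⟩
    obtain ⟨ε, hε, hball⟩ := Metric.isOpen_iff.mp hUopen x0 hx0U
    obtain ⟨x1, hx1U, hx1ne⟩ :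
        ∃ x1, x1 ∈ {x : ℝ | η x ≠ 0} ∩ Set.Ioo (-π) 0 ∧ x1 ≠ -(π / 2) := by
      by_cases h : x0 = -(π / 2)
      · refine ⟨x0 + ε / 2, hball ?_, ?_⟩
        · rw [Metric.mem_ball, Real.dist_eq]
          rw [show x0 + ε / 2 - x0 = ε / 2 by ring, abs_of_pos (by linarith)]
          linarith
        · rw [h]; intro hc; linarith
      · exact ⟨x0, hx0U, h⟩
    have hcos : cos x1 ≠ 0 := by
      intro hc
      obtain ⟨k, hk⟩ := Real.cos_eq_zero_iff.mp hc
      obtain ⟨-, h1, h2⟩ := hx1U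
      have hπ := pi_pos
      rw [hk] at h1 h2
      have hb1 : (2 * (k : ℝ) + 1) < 0 := by nlinarith
      have hb2 : (-2 : ℝ) < 2 * (k : ℝ) + 1 := by nlinarith
      have hk1 : 2 * k + 1 < 0 := by exact_mod_cast hb1
      have hk2 : (-2 : ℤ) < 2 * k + 1 := by exact_mod_cast hb2
      have hkeq : k = -1 := by omega
      rw [hkeq] at hk
      apply hx1ne
      rw [hk]; push_cast; ring
    have hVopen : IsOpen ({x : ℝ | η x ≠ 0} ∩ ({x : ℝ | cos x ≠ 0} ∩ Set.Ioo (-π) 0)) :=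
      (isOpen_compl_singleton.preimage hηcont).inter
        ((isOpen_compl_singleton.preimage Real.continuous_cos).inter isOpen_Ioo)
    have hVpos : 0 < volume ({x : ℝ | η x ≠ 0} ∩ ({x : ℝ | cos x ≠ 0} ∩ Set.Ioo (-π) 0)) :=
      hVopen.measure_pos volume ⟨x1, hx1U.1, hcos, hx1U.2⟩
    have hfc : Continuous fun x : ℝ => (η x) ^ 2 * (cos x) ^ 2 := by fun_prop
    rw [intervalIntegral.integral_of_le (by linarith [pi_pos] : (-π : ℝ) ≤ 0)]
    rw [setIntegral_pos_iff_support_of_nonneg_ae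
      (Filter.Eventually.of_forall fun x => by positivity)
      (hfc.intervalIntegrable (-π) 0).1]
    refine lt_of_lt_of_le hVpos (measure_mono ?_)
    rintro x ⟨h1, h2, h3⟩
    exact ⟨mul_ne_zero (pow_ne_zero 2 h1) (pow_ne_zero 2 h2), Set.Ioo_subset_Ioc_self h3⟩
  refine ⟨?_, neg_lt_zero.mpr hpos⟩
  intro n hn
  have hn' : (0 : ℝ) < n := by exact_mod_cast hn
  -- derivative of χ vanishes on negatives
  have hχ' : ∀ t : ℝ, t < 0 → deriv χ t = 0 := by
    intro t ht
    have hev : χ =ᶠ[nhds t] fun _ => (1 : ℝ) := by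
      filter_upwards [Iio_mem_nhds ht] with y hy
      exact hχ0 y hy.le
    rw [hev.deriv_eq]; simp
  -- full derivative of ψ
  have hψd : ∀ p : ℝ × ℝ, HasFDerivAt (fun p : ℝ × ℝ => χ (p.1 / n) * sin p.2)
      ((χ (p.1 / n)) • (cos p.2 • ContinuousLinearMap.snd ℝ ℝ ℝ)
        + (sin p.2) • ((deriv χ (p.1 / n) * (1 / (n : ℝ))) • ContinuousLinearMap.fst ℝ ℝ ℝ)) p := by
    intro p
    have h1 : HasDerivAt (fun x : ℝ => χ (x / n)) (deriv χ (p.1 / n) * (1 / (n : ℝ))) p.1 :=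
      ((hχ.differentiable (by simp) (p.1 / n)).hasDerivAt).comp p.1
        ((hasDerivAt_id p.1).div_const (n : ℝ))
    have h2 : HasFDerivAt (fun q : ℝ × ℝ => χ (q.1 / n))
        ((deriv χ (p.1 / n) * (1 / (n : ℝ))) • ContinuousLinearMap.fst ℝ ℝ ℝ) p :=
      h1.comp_hasFDerivAt p hasFDerivAt_fst
    have h3 : HasFDerivAt (fun q : ℝ × ℝ => sin q.2)
        ((cos p.2) • ContinuousLinearMap.snd ℝ ℝ ℝ) p :=
      (Real.hasDerivAt_sin p.2).comp_hasFDerivAt p hasFDerivAt_snd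
    exact h2.mul h3
  -- full derivative of φ
  have hφd : ∀ p : ℝ × ℝ, HasFDerivAt (fun p : ℝ × ℝ => η p.1 * (η (p.2 - π) * cos (p.2 - π)))
      ((η p.1) • (Gf' η p.2 • ContinuousLinearMap.snd ℝ ℝ ℝ)
        + (Gf η p.2) • ((deriv η p.1) • ContinuousLinearMap.fst ℝ ℝ ℝ)) p := by
    intro p
    have h4 : HasFDerivAt (fun q : ℝ × ℝ => η q.1)
        ((deriv η p.1) • ContinuousLinearMap.fst ℝ ℝ ℝ) p :=
      ((hη.differentiable (by simp) p.1).hasDerivAt).comp_hasFDerivAt p hasFDerivAt_fst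
    have h5 : HasFDerivAt (fun q : ℝ × ℝ => Gf η q.2)
        ((Gf' η p.2) • ContinuousLinearMap.snd ℝ ℝ ℝ) p :=
      (hasDerivAt_Gf hη p.2).comp_hasFDerivAt p hasFDerivAt_snd
    exact h4.mul h5
  have hψ1 : ∀ p : ℝ × ℝ, fderiv ℝ (fun p : ℝ × ℝ => χ (p.1 / n) * sin p.2) p (1, 0)
      = deriv χ (p.1 / n) * (1 / (n : ℝ)) * sin p.2 := by
    intro p
    rw [(hψd p).fderiv]
    simp
    all_goals ring
  have hψ2 : ∀ p : ℝ × ℝ, fderiv ℝ (fun p : ℝ × ℝ => χ (p.1 / n) * sin p.2) p (0, 1)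
      = χ (p.1 / n) * cos p.2 := by
    intro p
    rw [(hψd p).fderiv]
    simp
    all_goals ring
  have hφ1 : ∀ p : ℝ × ℝ, fderiv ℝ (fun p : ℝ × ℝ => η p.1 * (η (p.2 - π) * cos (p.2 - π))) p (1, 0)
      = deriv η p.1 * Gf η p.2 := by
    intro p
    rw [(hφd p).fderiv]
    simp
    all_goals ring
  have hφ2 : ∀ p : ℝ × ℝ, fderiv ℝ (fun p : ℝ × ℝ => η p.1 * (η (p.2 - π) * cos (p.2 - π))) p (0, 1)
      = η p.1 * Gf' η p.2 := by
    intro p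
    rw [(hφd p).fderiv]
    simp
    all_goals ring
  -- pointwise identification of the integrand
  have hpoint : ∀ p : ℝ × ℝ,
      (tan θ) ^ 2 * (fderiv ℝ (fun p : ℝ × ℝ => χ (p.1 / n) * sin p.2) p (1, 0)) *
          (fderiv ℝ (fun p : ℝ × ℝ => η p.1 * (η (p.2 - π) * cos (p.2 - π))) p (1, 0)) +
        (fderiv ℝ (fun p : ℝ × ℝ => χ (p.1 / n) * sin p.2) p (0, 1)) *
          (fderiv ℝ (fun p : ℝ × ℝ => η p.1 * (η (p.2 - π) * cos (p.2 - π))) p (0, 1)) -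
        (fun p : ℝ × ℝ => χ (p.1 / n) * sin p.2) p *
          (fun p : ℝ × ℝ => η p.1 * (η (p.2 - π) * cos (p.2 - π))) p = Ff η p := by
    intro p
    rw [hψ1, hψ2, hφ1, hφ2]
    by_cases hx : p.1 < 0
    · have hd : p.1 / n < 0 := div_neg_of_neg_of_pos hx hn'
      have h1 : deriv χ (p.1 / n) = 0 := hχ' _ hd
      have h2 : χ (p.1 / n) = 1 := hχ0 _ hd.le
      simp only [h1, h2, Ff, Gf, Gf']
      ring
    · have h1 : η p.1 = 0 := eta_zero hηsupp (by simp only [Set.mem_Ioo, not_and]; intro _; linarith)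
      have h2 : deriv η p.1 = 0 :=
        deriv_eta_zero hηsupp (by simp only [Set.mem_Ioo, not_and]; intro _; linarith)
      simp only [h1, h2, Ff]
      ring
  -- compact support and integrability of Ff
  have hFc : Continuous (Ff η) := continuous_Ff hη
  have hFcs : HasCompactSupport (Ff η) := by
    apply HasCompactSupport.intro (isCompact_Icc.prod isCompact_Icc :
      IsCompact ((Set.Icc (-π) 0) ×ˢ (Set.Icc 0 π)))
    intro p hp
    rw [Set.mem_prod, not_and_or] at hp
    rcases hp with hp | hp
    · have h1 : η p.1 = 0 := eta_zero hηsupp fun h => hp (Set.Ioo_subset_Icc_self h)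
      simp [Ff, h1]
    · have hy : p.2 - π ∉ Set.Ioo (-π) 0 := by
        simp only [Set.mem_Icc, not_and_or, not_le] at hp
        simp only [Set.mem_Ioo, not_and_or, not_lt]
        rcases hp with hp | hp
        · left; linarith
        · right; linarith
      have h1 : η (p.2 - π) = 0 := eta_zero hηsupp hy
      have h2 : deriv η (p.2 - π) = 0 := deriv_eta_zero hηsupp hy
      simp [Ff, Gf, Gf', h1, h2]
  have hFi : Integrable (Ff η) := hFc.integrable_of_hasCompactSupport hFcs
  have hind : Integrable (guide.indicator (Ff η)) := hFi.indicator guide_measurable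
  -- Fubini and the inner integral
  have hGf0 : Gf η 0 = 0 := by
    have h0 : η (-π) = 0 := eta_zero hηsupp (by simp [Set.mem_Ioo])
    simp [Gf, h0]
  have hinner : ∀ x : ℝ, (∫ y : ℝ, guide.indicator (Ff η) (x, y)) = -((η x) ^ 2 * (cos x) ^ 2) := by
    intro x
    by_cases hx : -π < x
    · have hb : 0 < min π (x + π) := lt_min pi_pos (by linarith)
      have hmem : ∀ y : ℝ, (x, y) ∈ guide ↔ y ∈ Set.Ioo 0 (min π (x + π)) := by
        intro y
        simp only [guide, Set.mem_setOf_eq, Set.mem_Ioo, lt_min_iff]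
        constructor
        · rintro ⟨_, h2, h3, h4⟩
          refine ⟨h2, h3, ?_⟩
          by_cases hx0 : x < 0
          · exact h4 hx0
          · linarith
        · rintro ⟨h2, h3, h4⟩
          exact ⟨hx, h2, h3, fun _ => h4⟩
      have hfun : (fun y => guide.indicator (Ff η) (x, y))
          = (Set.Ioo 0 (min π (x + π))).indicator (fun y => Ff η (x, y)) := by
        funext y
        by_cases h : y ∈ Set.Ioo 0 (min π (x + π))
        · rw [Set.indicator_of_mem ((hmem y).mpr h), Set.indicator_of_mem h]
        · rw [Set.indicator_of_notMem (fun hc => h ((hmem y).mp hc)),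
            Set.indicator_of_notMem h]
      have hcy : Continuous (fun y => Ff η (x, y)) := hFc.comp (Continuous.prodMk_right x)
      have hFTC : ∫ y in (0 : ℝ)..(min π (x + π)), Ff η (x, y)
          = η x * Gf η (min π (x + π)) * cos (min π (x + π)) - η x * Gf η 0 * cos 0 :=
        intervalIntegral.integral_eq_sub_of_hasDerivAt (fun t _ => hasDerivAt_M hη x t)
          (hcy.intervalIntegrable 0 (min π (x + π)))
      calc (∫ y : ℝ, guide.indicator (Ff η) (x, y))
          = ∫ y : ℝ, (Set.Ioo 0 (min π (x + π))).indicator (fun y => Ff η (x, y)) y := by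
            rw [hfun]
        _ = ∫ y in Set.Ioo 0 (min π (x + π)), Ff η (x, y) := integral_indicator measurableSet_Ioo
        _ = ∫ y in Set.Ioc 0 (min π (x + π)), Ff η (x, y) := (integral_Ioc_eq_integral_Ioo).symm
        _ = ∫ y in (0 : ℝ)..(min π (x + π)), Ff η (x, y) :=
            (intervalIntegral.integral_of_le hb.le).symm
        _ = η x * Gf η (min π (x + π)) * cos (min π (x + π)) - η x * Gf η 0 * cos 0 := hFTC
        _ = -((η x) ^ 2 * (cos x) ^ 2) := by
            rw [hGf0]
            by_cases hx0 : x < 0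
            · have hmin : min π (x + π) = x + π := min_eq_right (by linarith)
              rw [hmin]
              have : Gf η (x + π) = η x * cos x := by simp [Gf]
              rw [this, Real.cos_add_pi]
              ring
            · have h1 : η x = 0 := eta_zero hηsupp
                (by simp only [Set.mem_Ioo, not_and]; intro _; linarith)
              rw [h1]; ring
    · have hzero : ∀ y : ℝ, guide.indicator (Ff η) (x, y) = 0 := by
        intro y
        apply Set.indicator_of_notMem
        intro hmem
        exact hx hmem.1
      have h1 : η x = 0 := eta_zero hηsupp
        (by simp only [Set.mem_Ioo, not_and_or, not_lt]; left; linarith)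
      simp only [hzero, h1]
      simp
  -- put it together
  have hout : (∫ x : ℝ, -((η x) ^ 2 * (cos x) ^ 2))
      = -∫ x in (-π)..0, (η x) ^ 2 * (cos x) ^ 2 := by
    rw [integral_neg]
    congr 1
    have hsub : ∀ x : ℝ, x ∉ Set.Ioc (-π) 0 → (η x) ^ 2 * (cos x) ^ 2 = 0 := by
      intro x hx
      have : η x = 0 := eta_zero hηsupp fun h => hx (Set.Ioo_subset_Ioc_self h)
      simp [this]
    rw [intervalIntegral.integral_of_le (by linarith [pi_pos] : (-π : ℝ) ≤ 0)]
    exact (setIntegral_eq_integral_of_forall_compl_eq_zero hsub).symm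
  calc shiftedBilin θ (fun p => χ (p.1 / n) * sin p.2)
        (fun p => η p.1 * (η (p.2 - π) * cos (p.2 - π)))
      = ∫ p in guide, Ff η p := by
        unfold shiftedBilin
        exact integral_congr_ae (Filter.Eventually.of_forall fun p => hpoint p)
    _ = ∫ p : ℝ × ℝ, guide.indicator (Ff η) p := (integral_indicator guide_measurable).symm
    _ = ∫ x : ℝ, ∫ y : ℝ, guide.indicator (Ff η) (x, y) := by
        rw [Measure.volume_eq_prod]
        exact integral_prod _ hind
    _ = ∫ x : ℝ, -((η x) ^ 2 * (cos x) ^ 2) := by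
        congr 1
        funext x
        exact hinner x
    _ = -∫ x in (-π)..0, (η x) ^ 2 * (cos x) ^ 2 := hout
end

section
/- Let $Z_0$ be the smallest positive root of $\frac{1}{4}\big(\frac{1}{(1-Z)^2} + Z\big) = 1$ (numerically $Z_0 \approx 0.4679$). For $\theta \in (0,\pi/2)$, every positive integer $j$ with $4^{1/3} j^{2/3} \sin^{2/3}\theta \le Z_0$ satisfies: with $\alpha = 4^{1/3} j^{2/3}\sin^{-1/3}\theta$ and $\beta = (1-\alpha\sin\theta)/\cos\theta$, the quantity $\frac{\cos^2\theta}{4(1-\alpha\sin\theta)^2} + \frac{j^2}{\alpha^2} < 1$. Consequently the number of integers $j$ with this property is at least $Z_0^{3/2}\cdot\frac{1}{2}\sin^{-1}\theta$, which tends to infinity like $\theta^{-1}$ as $\theta \to 0$. -/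
open Real

/-!
Put `Z = α sin θ = 4^{1/3} j^{2/3} sin^{2/3} θ`. The exponents are chosen so that `α³ sin θ = 4 j²`,
i.e. `j² / α² = Z / 4`, and the quantity becomes `cos²θ / (4 (1 - Z)²) + Z / 4`, which is strictly
below `f Z = (1/4) (1 / (1 - Z)² + Z)`. Now `f` is increasing on `Z < 1` and `f Z₀ = 1`, where
`Z₀ < 1` because `f` already reaches `1` on `[1/4, 1/2]`. Finally `Z = (2 j sin θ)^{2/3}`, so
`Z ≤ Z₀` means `j ≤ Z₀^{3/2} / (2 sin θ)`, and all of `j = 1, …, ⌊Z₀^{3/2} / (2 sin θ)⌋` qualify.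
-/

theorem exists_one_quarter_inv_one_sub_sq_add_eq_one :
    ∃ Z ∈ Set.Icc (1 / 4 : ℝ) (1 / 2), (1 / 4) * (1 / (1 - Z) ^ 2 + Z) = 1 := by
  have hcont : ContinuousOn (fun Z : ℝ => (1 / 4) * (1 / (1 - Z) ^ 2 + Z))
      (Set.Icc (1 / 4) (1 / 2)) := by
    refine continuousOn_const.mul (ContinuousOn.add ?_ continuousOn_id)
    refine continuousOn_const.div (by fun_prop) fun Z hZ => ?_
    exact pow_ne_zero 2 (by linarith [hZ.2])
  exact intermediate_value_Icc (by norm_num) hcont ⟨by norm_num, by norm_num⟩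

theorem div_four_mul_one_sub_sq_add_lt_one {c Z Z₀ : ℝ} (hc : c < 1) (hZ : Z ≤ Z₀)
    (hZ₀ : Z₀ < 1) (hroot : (1 / 4) * (1 / (1 - Z₀) ^ 2 + Z₀) = 1) :
    c / (4 * (1 - Z) ^ 2) + Z / 4 < 1 := by
  have hsq : (1 - Z₀) ^ 2 ≤ (1 - Z) ^ 2 := pow_le_pow_left₀ (by linarith) (by linarith) 2
  have hinv : 1 / (1 - Z) ^ 2 ≤ 1 / (1 - Z₀) ^ 2 :=
    one_div_le_one_div_of_le (by nlinarith) hsq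
  have hc' : c / (4 * (1 - Z) ^ 2) < 1 / (4 * (1 - Z) ^ 2) :=
    div_lt_div_of_pos_right hc (by nlinarith)
  calc c / (4 * (1 - Z) ^ 2) + Z / 4 < 1 / (4 * (1 - Z) ^ 2) + Z / 4 := by linarith
    _ = (1 / 4) * (1 / (1 - Z) ^ 2 + Z) := by rw [mul_comm (4 : ℝ), ← div_div]; ring
    _ ≤ (1 / 4) * (1 / (1 - Z₀) ^ 2 + Z₀) := by linarith
    _ = 1 := hroot

theorem rpow_neg_one_third_mul_self {s : ℝ} (hs : 0 < s) :
    s ^ (-(1 : ℝ) / 3) * s = s ^ ((2 : ℝ) / 3) := by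
  rw [show (2 : ℝ) / 3 = -(1 : ℝ) / 3 + 1 by norm_num, rpow_add hs, rpow_one]

theorem cube_mul_eq_four_mul_sq {x s : ℝ} (hx : 0 ≤ x) (hs : 0 < s) :
    ((4 : ℝ) ^ ((1 : ℝ) / 3) * x ^ ((2 : ℝ) / 3) * s ^ (-(1 : ℝ) / 3)) ^ 3 * s = 4 * x ^ 2 := by
  simp only [mul_pow, ← rpow_natCast, ← rpow_mul (by norm_num : (0 : ℝ) ≤ 4), ← rpow_mul hx,
    ← rpow_mul hs.le]
  norm_num [rpow_neg_one, hs.ne']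

theorem sq_div_sq_eq_mul_div_four {x s : ℝ} (hx : 0 < x) (hs : 0 < s) :
    x ^ 2 / ((4 : ℝ) ^ ((1 : ℝ) / 3) * x ^ ((2 : ℝ) / 3) * s ^ (-(1 : ℝ) / 3)) ^ 2 =
      (4 : ℝ) ^ ((1 : ℝ) / 3) * x ^ ((2 : ℝ) / 3) * s ^ (-(1 : ℝ) / 3) * s / 4 := by
  rw [div_eq_div_iff (by positivity) (by norm_num)]
  linear_combination -(cube_mul_eq_four_mul_sq hx.le hs)

theorem four_rpow_third_mul_rpow_two_thirds_le_iff {x s Z₀ : ℝ} (hx : 0 ≤ x) (hs : 0 < s)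
    (hZ₀ : 0 ≤ Z₀) :
    (4 : ℝ) ^ ((1 : ℝ) / 3) * x ^ ((2 : ℝ) / 3) * s ^ ((2 : ℝ) / 3) ≤ Z₀ ↔
      x ≤ Z₀ ^ ((3 : ℝ) / 2) * (1 / 2) / s := by
  have h4 : (4 : ℝ) ^ ((1 : ℝ) / 3) = 2 ^ ((2 : ℝ) / 3) := by
    rw [show (4 : ℝ) = 2 ^ (2 : ℝ) by norm_num, ← rpow_mul (by norm_num)]
    norm_num
  rw [h4, ← mul_rpow (by norm_num) hx, ← mul_rpow (by positivity) hs.le,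
    show (2 : ℝ) / 3 = ((3 : ℝ) / 2)⁻¹ by norm_num,
    rpow_inv_le_iff_of_pos (by positivity) hZ₀ (by norm_num), le_div_iff₀ hs]
  constructor <;> intro h <;> linarith

theorem le_ncard_setOf_one_le_and_le {m : ℕ} {b : ℝ} (hm : (m : ℝ) ≤ b) :
    m ≤ {j : ℕ | 1 ≤ j ∧ (j : ℝ) ≤ b}.ncard := by
  have hb : 0 ≤ b := (Nat.cast_nonneg m).trans hm
  have hset : {j : ℕ | 1 ≤ j ∧ (j : ℝ) ≤ b} = Set.Icc 1 ⌊b⌋₊ := by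
    ext j
    simp [Nat.le_floor_iff hb]
  rw [hset, ← Finset.coe_Icc, Set.ncard_coe_finset, Nat.card_Icc]
  have := Nat.le_floor hm
  omega

/-- Let `Z₀` be the smallest positive root of
`(1/4)(1/(1-Z)² + Z) = 1`. For `θ ∈ (0,π/2)`, every integer `j ≥ 1` with
`4^{1/3} j^{2/3} sin^{2/3}θ ≤ Z₀` satisfies, with `α = 4^{1/3} j^{2/3} sin^{-1/3}θ`,
`cos²θ/(4(1-α sinθ)²) + j²/α² < 1`; consequently the number of such `j` is at least
`Z₀^{3/2} · (1/2) · sin⁻¹θ`. -/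
theorem small_angle_eigenvalue_count (Z₀ : ℝ) (hZ₀pos : 0 < Z₀)
    (hZ₀root : (1 / 4) * (1 / (1 - Z₀) ^ 2 + Z₀) = 1)
    (hZ₀min : ∀ Z : ℝ, 0 < Z → (1 / 4) * (1 / (1 - Z) ^ 2 + Z) = 1 → Z₀ ≤ Z)
    (θ : ℝ) (hθ₁ : 0 < θ) (hθ₂ : θ < π / 2) :
    (∀ j : ℕ, 1 ≤ j →
      (4 : ℝ) ^ ((1 : ℝ) / 3) * (j : ℝ) ^ ((2 : ℝ) / 3) * (sin θ) ^ ((2 : ℝ) / 3) ≤ Z₀ →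
      cos θ ^ 2 /
          (4 * (1 - ((4 : ℝ) ^ ((1 : ℝ) / 3) * (j : ℝ) ^ ((2 : ℝ) / 3) *
              (sin θ) ^ (-(1 : ℝ) / 3)) * sin θ) ^ 2) +
        (j : ℝ) ^ 2 / ((4 : ℝ) ^ ((1 : ℝ) / 3) * (j : ℝ) ^ ((2 : ℝ) / 3) *
            (sin θ) ^ (-(1 : ℝ) / 3)) ^ 2 < 1) ∧
    (∀ m : ℕ, (m : ℝ) ≤ Z₀ ^ ((3 : ℝ) / 2) * (1 / 2) / sin θ →
      m ≤ Set.ncard {j : ℕ | 1 ≤ j ∧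
        (4 : ℝ) ^ ((1 : ℝ) / 3) * (j : ℝ) ^ ((2 : ℝ) / 3) * (sin θ) ^ ((2 : ℝ) / 3) ≤ Z₀}) := by
  have hs : 0 < sin θ := sin_pos_of_pos_of_lt_pi hθ₁ (by linarith [pi_pos])
  have hZ₀lt : Z₀ < 1 := by
    obtain ⟨Z, hZ, hZroot⟩ := exists_one_quarter_inv_one_sub_sq_add_eq_one
    linarith [hZ₀min Z (by linarith [hZ.1]) hZroot, hZ.2]
  refine ⟨fun j hj hjZ₀ => ?_, fun m hm => ?_⟩
  · have hcos : cos θ ^ 2 < 1 := by nlinarith [sin_sq_add_cos_sq θ]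
    rw [sq_div_sq_eq_mul_div_four (by exact_mod_cast hj) hs, mul_assoc _ _ (sin θ),
      rpow_neg_one_third_mul_self hs]
    exact div_four_mul_one_sub_sq_add_lt_one hcos hjZ₀ hZ₀lt hZ₀root
  · have hset : {j : ℕ | 1 ≤ j ∧
          (4 : ℝ) ^ ((1 : ℝ) / 3) * (j : ℝ) ^ ((2 : ℝ) / 3) * (sin θ) ^ ((2 : ℝ) / 3) ≤ Z₀} =
        {j : ℕ | 1 ≤ j ∧ (j : ℝ) ≤ Z₀ ^ ((3 : ℝ) / 2) * (1 / 2) / sin θ} := by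
      ext j
      simp only [Set.mem_ofPred_eq,
        four_rpow_third_mul_rpow_two_thirds_le_iff (Nat.cast_nonneg j) hs hZ₀pos.le]
    rw [hset]
    exact le_ncard_setOf_one_le_and_le hm
end
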